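/- Let ψ, ν ∈ Ψ and assume that ψ satisfies the Δ₂-type condition: there exists C ∈ (0,∞) with ψ(2p) ≤ C·ψ(p) for all p ≥ 2, and that lim_{p → ∞} ψ(p)/ν(p) = 0. Then every martingale (S_n, 𝓕_n) with sup_n ‖S_n‖_{G(ψ)} < ∞ converges almost surely to a random variable S and lim_{n → ∞} ‖S_n − S‖_{G(ν)} = 0. -/

import Mathlib

open MeasureTheory Filter Set
open scoped ENNReal Topology

/-- `ψ` belongs to the class `Ψ`: `p ↦ p·log ψ(p)` is continuous, convex, increasing,
tends to `+∞`, and `ψ(p) → ∞` as `p → ∞`; `ψ` is positive on `[2,∞)`. -/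
structure PsiClass (ψ : ℝ → ℝ) : Prop where
  pos : ∀ p : ℝ, 2 ≤ p → 0 < ψ p
  cont : ContinuousOn (fun p => p * Real.log (ψ p)) (Set.Ici 2)
  convex : ConvexOn ℝ (Set.Ici 2) (fun p => p * Real.log (ψ p))
  mono : MonotoneOn (fun p => p * Real.log (ψ p)) (Set.Ici 2)
  tendsto_top : Filter.Tendsto (fun p => p * Real.log (ψ p)) Filter.atTop Filter.atTop
  psi_tendsto_top : Filter.Tendsto ψ Filter.atTop Filter.atTop

/-- The norm `‖η‖_{G(ψ)} = sup_{p ≥ 2} |η|_p / ψ(p)` (valued in `ℝ≥0∞`). -/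
noncomputable def Gnorm {Ω : Type*} [MeasurableSpace Ω] (μ : Measure Ω)
    (ψ : ℝ → ℝ) (η : Ω → ℝ) : ℝ≥0∞ :=
  ⨆ p : {p : ℝ // 2 ≤ p}, eLpNorm η (ENNReal.ofReal (p : ℝ)) μ / ENNReal.ofReal (ψ (p : ℝ))

/-!
Boundedness in `G(ψ)` bounds the martingale in every `L^p`; in particular it is bounded in `L¹`
and converges a.e. Bounded in `L^{2P}`, it is uniformly integrable in `L^P`, so by Vitali it
converges in every `L^P`. For the `G(ν)` norm, exponents in `[2, P]` are controlled by the
`L^P` convergence and exponents beyond `P` by the uniform bound `2 M ψ(p)`, which is small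
against `ν(p)` once `P` is large because `ψ = o(ν)`.
-/

open scoped NNReal

section Integrability

variable {α E : Type*} [MeasurableSpace α] {μ : Measure α} [NormedAddCommGroup E]

lemma eLpNorm_indicator_norm_ge_le (f : α → E) {C : ℝ≥0} (hC : 0 < C) (p : ℝ≥0∞) {r : ℝ}
    (hr : 1 ≤ r) :
    eLpNorm ({x | C ≤ ‖f x‖₊}.indicator f) p μ ≤
      ENNReal.ofReal ((C : ℝ) ^ (1 - r)) * eLpNorm f (p * ENNReal.ofReal r) μ ^ r := by
  have hC' : (0 : ℝ) < C := hC
  have hpt : ∀ x, ‖{x | C ≤ ‖f x‖₊}.indicator f x‖ ≤ (C : ℝ) ^ (1 - r) * ‖f x‖ ^ r := by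
    intro x
    by_cases hx : C ≤ ‖f x‖₊
    · rw [Set.indicator_of_mem (by exact hx)]
      have hCx : (C : ℝ) ≤ ‖f x‖ := by exact_mod_cast hx
      calc ‖f x‖ = (C : ℝ) ^ (1 - r) * ((C : ℝ) ^ (r - 1) * ‖f x‖ ^ (1 : ℝ)) := by
            rw [Real.rpow_one, ← mul_assoc, ← Real.rpow_add hC']
            norm_num
        _ ≤ (C : ℝ) ^ (1 - r) * (‖f x‖ ^ (r - 1) * ‖f x‖ ^ (1 : ℝ)) := by
            gcongr
        _ = (C : ℝ) ^ (1 - r) * ‖f x‖ ^ r := by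
            rw [← Real.rpow_add (hC'.trans_le hCx)]
            norm_num
    · rw [Set.indicator_of_notMem (by exact hx), norm_zero]
      positivity
  calc _ ≤ eLpNorm ((C : ℝ) ^ (1 - r) • fun x => ‖f x‖ ^ r) p μ := eLpNorm_mono_real hpt
    _ = _ := by
      rw [eLpNorm_const_smul, eLpNorm_norm_rpow f (by linarith),
        Real.enorm_of_nonneg (by positivity)]

lemma unifIntegrable_of_eLpNorm_le {ι : Type*} {f : ι → α → E}
    (hf : ∀ i, AEStronglyMeasurable (f i) μ) {p q : ℝ} (hp : 1 ≤ p) (hpq : p < q) {K : ℝ≥0∞}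
    (hK : K ≠ ∞) (hbdd : ∀ i, eLpNorm (f i) (ENNReal.ofReal q) μ ≤ K) :
    UnifIntegrable f (ENNReal.ofReal p) μ := by
  have hp0 : 0 < p := by linarith
  set r := q / p
  have hr : 1 < r := (one_lt_div hp0).2 hpq
  refine unifIntegrable_of (ENNReal.one_le_ofReal.2 hp) ENNReal.ofReal_ne_top hf fun ε hε => ?_
  have hsmall : Tendsto (fun C : ℝ => C ^ (1 - r) * K.toReal ^ r) atTop (𝓝 0) := by
    simpa [neg_sub] using (tendsto_rpow_neg_atTop (sub_pos.2 hr)).mul_const (K.toReal ^ r)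
  obtain ⟨C₀, hC₀⟩ := eventually_atTop.1 (hsmall.eventually_lt_const hε)
  refine ⟨(max C₀ 1).toNNReal, fun i => ?_⟩
  have hC : 0 < (max C₀ 1).toNNReal := Real.toNNReal_pos.2 (lt_max_of_lt_right one_pos)
  have hCcoe : ((max C₀ 1).toNNReal : ℝ) = max C₀ 1 := Real.coe_toNNReal _ (by positivity)
  calc _ ≤ ENNReal.ofReal ((max C₀ 1) ^ (1 - r)) *
        eLpNorm (f i) (ENNReal.ofReal p * ENNReal.ofReal r) μ ^ r := by
        simpa only [hCcoe] using eLpNorm_indicator_norm_ge_le (f i) hC _ hr.le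
    _ ≤ ENNReal.ofReal ((max C₀ 1) ^ (1 - r)) * K ^ r := by
        rw [← ENNReal.ofReal_mul hp0.le, mul_div_cancel₀ _ hp0.ne']
        gcongr
        exact hbdd i
    _ = ENNReal.ofReal ((max C₀ 1) ^ (1 - r) * K.toReal ^ r) := by
        rw [ENNReal.ofReal_mul (by positivity),
          ← ENNReal.ofReal_rpow_of_nonneg ENNReal.toReal_nonneg (by linarith),
          ENNReal.ofReal_toReal hK]
    _ ≤ ENNReal.ofReal ε := ENNReal.ofReal_le_ofReal (hC₀ _ (le_max_left _ _)).le

lemma eLpNorm_le_of_ae_tendsto {f : ℕ → α → E} {g : α → E} {p K : ℝ≥0∞}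
    (hf : ∀ n, AEStronglyMeasurable (f n) μ)
    (hfg : ∀ᵐ x ∂μ, Tendsto (fun n => f n x) atTop (𝓝 (g x)))
    (hbdd : ∀ n, eLpNorm (f n) p μ ≤ K) : eLpNorm g p μ ≤ K :=
  (Lp.eLpNorm_lim_le_liminf_eLpNorm hf g hfg).trans
    (liminf_le_of_frequently_le' (.of_forall hbdd))

lemma tendsto_eLpNorm_sub_of_ae_tendsto [IsFiniteMeasure μ] {f : ℕ → α → E} {g : α → E}
    (hf : ∀ n, AEStronglyMeasurable (f n) μ)
    (hfg : ∀ᵐ x ∂μ, Tendsto (fun n => f n x) atTop (𝓝 (g x)))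
    {p q : ℝ} (hp : 1 ≤ p) (hpq : p < q) {K : ℝ≥0∞} (hK : K ≠ ∞)
    (hbdd : ∀ n, eLpNorm (f n) (ENNReal.ofReal q) μ ≤ K) :
    Tendsto (fun n => eLpNorm (f n - g) (ENNReal.ofReal p) μ) atTop (𝓝 0) := by
  have hg : MemLp g (ENNReal.ofReal q) μ :=
    ⟨aestronglyMeasurable_of_tendsto_ae _ hf hfg,
      (eLpNorm_le_of_ae_tendsto hf hfg hbdd).trans_lt hK.lt_top⟩
  exact tendsto_Lp_finite_of_tendsto_ae (ENNReal.one_le_ofReal.2 hp) ENNReal.ofReal_ne_top hf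
    (hg.mono_exponent (ENNReal.ofReal_le_ofReal hpq.le))
    (unifIntegrable_of_eLpNorm_le hf hp hpq hK hbdd) hfg

end Integrability

section Gnorm

variable {Ω : Type*} [MeasurableSpace Ω] {μ : Measure Ω} {ψ : ℝ → ℝ} {η : Ω → ℝ}

lemma eLpNorm_le_Gnorm_mul {p : ℝ} (hp : 2 ≤ p) (hψ : 0 < ψ p) :
    eLpNorm η (ENNReal.ofReal p) μ ≤ Gnorm μ ψ η * ENNReal.ofReal (ψ p) :=
  (ENNReal.div_le_iff_le_mul (.inl (ENNReal.ofReal_pos.2 hψ).ne') (.inl ENNReal.ofReal_ne_top)).1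
    (le_iSup (fun q : {p : ℝ // 2 ≤ p} =>
      eLpNorm η (ENNReal.ofReal q) μ / ENNReal.ofReal (ψ q)) ⟨p, hp⟩)

lemma Gnorm_le_of_eLpNorm_le {c : ℝ≥0∞} (hψ : ∀ p, 2 ≤ p → 0 < ψ p)
    (h : ∀ p, 2 ≤ p → eLpNorm η (ENNReal.ofReal p) μ ≤ c * ENNReal.ofReal (ψ p)) :
    Gnorm μ ψ η ≤ c :=
  iSup_le fun ⟨p, hp⟩ => (ENNReal.div_le_iff_le_mul (.inl (ENNReal.ofReal_pos.2 (hψ p hp)).ne')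
    (.inl ENNReal.ofReal_ne_top)).2 (h p hp)

end Gnorm

lemma PsiClass.continuousOn {ψ : ℝ → ℝ} (hψ : PsiClass ψ) : ContinuousOn ψ (Ici 2) := by
  have hexp : ContinuousOn (fun p => Real.exp (p * Real.log (ψ p) / p)) (Ici 2) :=
    (hψ.cont.div continuousOn_id fun p (hp : 2 ≤ p) => by positivity).rexp
  refine hexp.congr fun p (hp : 2 ≤ p) => ?_
  dsimp only
  rw [mul_div_cancel_left₀ _ (by positivity), Real.exp_log (hψ.pos p hp)]

lemma exists_pos_le_on_Icc {ν : ℝ → ℝ} (hpos : ∀ p, 2 ≤ p → 0 < ν p)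
    (hcont : ContinuousOn ν (Ici 2)) {P : ℝ} (hP : 2 ≤ P) : ∃ c > 0, ∀ p ∈ Icc 2 P, c ≤ ν p := by
  obtain ⟨p₀, hp₀, hmin⟩ :=
    isCompact_Icc.exists_isMinOn (nonempty_Icc.2 hP) (hcont.mono Icc_subset_Ici_self)
  exact ⟨ν p₀, hpos p₀ hp₀.1, hmin⟩

theorem tendsto_Gnorm_zero_of_tendsto_eLpNorm {Ω ι : Type*} [MeasurableSpace Ω] {μ : Measure Ω}
    [IsProbabilityMeasure μ] {ψ ν : ℝ → ℝ} (hνpos : ∀ p, 2 ≤ p → 0 < ν p)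
    (hνcont : ContinuousOn ν (Ici 2)) (hlim : Tendsto (fun p => ψ p / ν p) atTop (𝓝 0))
    {l : Filter ι} {T : ι → Ω → ℝ} (hT : ∀ i, AEStronglyMeasurable (T i) μ)
    {B : ℝ≥0∞} (hB : B ≠ ∞)
    (hbdd : ∀ i p, 2 ≤ p → eLpNorm (T i) (ENNReal.ofReal p) μ ≤ B * ENNReal.ofReal (ψ p))
    (hconv : ∀ P, 2 ≤ P → Tendsto (fun i => eLpNorm (T i) (ENNReal.ofReal P) μ) l (𝓝 0)) :
    Tendsto (fun i => Gnorm μ ν (T i)) l (𝓝 0) := by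
  rw [ENNReal.tendsto_nhds_zero]
  intro ε hε
  obtain ⟨δ, hδ, hδB⟩ := ENNReal.exists_nnreal_pos_mul_lt hB hε.ne'
  obtain ⟨P₀, hP₀⟩ := eventually_atTop.1 (hlim.eventually_lt_const (NNReal.coe_pos.2 hδ))
  have hP : 2 ≤ max P₀ 2 := le_max_right _ _
  obtain ⟨c, hc, hcν⟩ := exists_pos_le_on_Icc hνpos hνcont hP
  have hcε : 0 < ENNReal.ofReal c * ε :=
    pos_iff_ne_zero.2 (mul_ne_zero (ENNReal.ofReal_pos.2 hc).ne' hε.ne')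
  filter_upwards [ENNReal.tendsto_nhds_zero.1 (hconv _ hP) _ hcε] with i hi
  refine Gnorm_le_of_eLpNorm_le hνpos fun p hp => ?_
  rcases le_or_gt p (max P₀ 2) with hpP | hPp
  · calc eLpNorm (T i) (ENNReal.ofReal p) μ ≤ eLpNorm (T i) (ENNReal.ofReal (max P₀ 2)) μ :=
          eLpNorm_le_eLpNorm_of_exponent_le (ENNReal.ofReal_le_ofReal hpP) (hT i)
      _ ≤ ENNReal.ofReal c * ε := hi
      _ ≤ ε * ENNReal.ofReal (ν p) := by
          rw [mul_comm]
          gcongr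
          exact hcν p ⟨hp, hpP⟩
  · have hψν : ψ p ≤ δ * ν p :=
      ((div_lt_iff₀ (hνpos p hp)).1 (hP₀ p ((le_max_left _ _).trans hPp.le))).le
    calc eLpNorm (T i) (ENNReal.ofReal p) μ ≤ B * ENNReal.ofReal (ψ p) := hbdd i p hp
      _ ≤ B * (δ * ENNReal.ofReal (ν p)) := by
          gcongr
          rw [← ENNReal.ofReal_coe_nnreal, ← ENNReal.ofReal_mul δ.coe_nonneg]
          exact ENNReal.ofReal_le_ofReal hψν
      _ ≤ ε * ENNReal.ofReal (ν p) := by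
          rw [← mul_assoc, mul_comm B]
          gcongr

theorem stmt16_general {Ω : Type*} [m0 : MeasurableSpace Ω] (μ : Measure Ω) [IsProbabilityMeasure μ]
    (ψ ν : ℝ → ℝ) (hψ : PsiClass ψ) (hν : PsiClass ν)
    (hlim : Filter.Tendsto (fun p => ψ p / ν p) Filter.atTop (𝓝 0))
    (ℱ : Filtration ℕ m0) (S : ℕ → Ω → ℝ) (hmart : Martingale S ℱ μ)
    (hbdd : (⨆ n : ℕ, Gnorm μ ψ (S n)) < ⊤) :
    ∃ Slim : Ω → ℝ,
      (∀ᵐ ω ∂μ, Filter.Tendsto (fun n => S n ω) Filter.atTop (𝓝 (Slim ω))) ∧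
      Filter.Tendsto (fun n => Gnorm μ ν (fun ω => S n ω - Slim ω)) Filter.atTop (𝓝 0) := by
  set M := ⨆ n, Gnorm μ ψ (S n)
  have hSm : ∀ n, AEStronglyMeasurable (S n) μ :=
    fun n => ((hmart.stronglyAdapted n).mono (ℱ.le n)).aestronglyMeasurable
  have hS : ∀ n p, 2 ≤ p → eLpNorm (S n) (ENNReal.ofReal p) μ ≤ M * ENNReal.ofReal (ψ p) :=
    fun n p hp => (eLpNorm_le_Gnorm_mul hp (hψ.pos p hp)).trans
      (mul_le_mul_left (le_iSup (fun n => Gnorm μ ψ (S n)) n) _)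
  obtain ⟨Slim, hae⟩ : ∃ Slim : Ω → ℝ, ∀ᵐ ω ∂μ, Tendsto (fun n => S n ω) atTop (𝓝 (Slim ω)) := by
    refine ⟨_, hmart.submartingale.ae_tendsto_limitProcess
      (R := (M * ENNReal.ofReal (ψ 2)).toNNReal) fun n => ?_⟩
    rw [ENNReal.coe_toNNReal (ENNReal.mul_ne_top hbdd.ne ENNReal.ofReal_ne_top)]
    exact (eLpNorm_le_eLpNorm_of_exponent_le (by simp) (hSm n)).trans (hS n 2 le_rfl)
  have hSlim := aestronglyMeasurable_of_tendsto_ae _ hSm hae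
  refine ⟨Slim, hae, tendsto_Gnorm_zero_of_tendsto_eLpNorm hν.pos hν.continuousOn hlim
    (T := fun n => S n - Slim) (B := M + M) (fun n => (hSm n).sub hSlim)
    (ENNReal.add_ne_top.2 ⟨hbdd.ne, hbdd.ne⟩) (fun n p hp => ?_) fun P hP => ?_⟩
  · calc eLpNorm (S n - Slim) (ENNReal.ofReal p) μ
        ≤ eLpNorm (S n) (ENNReal.ofReal p) μ + eLpNorm Slim (ENNReal.ofReal p) μ :=
          eLpNorm_sub_le (hSm n) hSlim (ENNReal.one_le_ofReal.2 (by linarith))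
      _ ≤ (M + M) * ENNReal.ofReal (ψ p) := by
          rw [add_mul]
          exact add_le_add (hS n p hp)
            (eLpNorm_le_of_ae_tendsto hSm hae fun n => hS n p hp)
  · exact tendsto_eLpNorm_sub_of_ae_tendsto hSm hae (by linarith : 1 ≤ P) (by linarith : P < 2 * P)
      (ENNReal.mul_ne_top hbdd.ne ENNReal.ofReal_ne_top) fun n => hS n (2 * P) (by linarith)

theorem stmt16 {Ω : Type*} [m0 : MeasurableSpace Ω] (μ : Measure Ω) [IsProbabilityMeasure μ]
    (ψ ν : ℝ → ℝ) (hψ : PsiClass ψ) (hν : PsiClass ν)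
    (hΔ2 : ∃ C : ℝ, 0 < C ∧ ∀ p : ℝ, 2 ≤ p → ψ (2 * p) ≤ C * ψ p)
    (hlim : Filter.Tendsto (fun p => ψ p / ν p) Filter.atTop (𝓝 0))
    (ℱ : Filtration ℕ m0) (S : ℕ → Ω → ℝ) (hmart : Martingale S ℱ μ)
    (hbdd : (⨆ n : ℕ, Gnorm μ ψ (S n)) < ⊤) :
    ∃ Slim : Ω → ℝ,
      (∀ᵐ ω ∂μ, Filter.Tendsto (fun n => S n ω) Filter.atTop (𝓝 (Slim ω))) ∧
      Filter.Tendsto (fun n => Gnorm μ ν (fun ω => S n ω - Slim ω)) Filter.atTop (𝓝 0) :=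
  stmt16_general (m0 := m0) μ ψ ν hψ hν hlim ℱ S hmart hbdd
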